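/- Let (Ω, μ) be a probability space, A an invertible N×N real matrix with largest and smallest singular values ρ_max and ρ_min and condition number κ(A) = ρ_max/ρ_min, F : Ω → R^N Bochner integrable, and α* := ω ↦ A⁻¹F(ω). Let S be a nonempty set of Bochner-integrable functions Ω → R^N and let α̂_H ∈ S be a minimizer over S of the normal-equation loss H(α) = ∫_Ω |AᵀAα(ω) − AᵀF(ω)|₂ dμ(ω). Then ‖α* − α̂_H‖_{L¹(Ω)} ≤ κ(A)² · inf_{α ∈ S} ‖α − α*‖_{L¹(Ω)}. -/

import Mathlib

/-!
Since `α*` solves the normal equations `AᵀA α* = AᵀF`, the loss is `H(α) = ∫ |AᵀA (α - α*)|₂`.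
The eigenvalues of the symmetric matrix `AᵀA` lie in `[ρmin², ρmax²]`, so
`ρmin² |x|₂ ≤ |AᵀA x|₂ ≤ ρmax² |x|₂`, and for every `α ∈ S`
`ρmin² ‖α̂_H - α*‖ ≤ H(α̂_H) ≤ H(α) ≤ ρmax² ‖α - α*‖`; it remains to take the infimum over `S`.
-/

open MeasureTheory Matrix

/-- The Euclidean norm on `ℝ^N`. -/
noncomputable def euclNorm {N : ℕ} (x : Fin N → ℝ) : ℝ := Real.sqrt (∑ i, x i ^ 2)

namespace LinearMap.IsSymmetric

variable {𝕜 E : Type*} [RCLike 𝕜] [NormedAddCommGroup E] [InnerProductSpace 𝕜 E]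
  [FiniteDimensional 𝕜 E] {T : E →ₗ[𝕜] E} {n : ℕ}

theorem norm_sq_apply_eq_sum (hT : T.IsSymmetric) (hn : Module.finrank 𝕜 E = n) (v : E) :
    ‖T v‖ ^ 2 = ∑ i, hT.eigenvalues hn i ^ 2 * ‖(hT.eigenvectorBasis hn).repr v i‖ ^ 2 := by
  rw [← (hT.eigenvectorBasis hn).repr.norm_map, EuclideanSpace.norm_sq_eq]
  simp_rw [eigenvectorBasis_apply_self_apply, norm_mul, mul_pow, RCLike.norm_ofReal, sq_abs]

theorem norm_apply_le (hT : T.IsSymmetric) (hn : Module.finrank 𝕜 E = n) {b : ℝ} (hb₀ : 0 ≤ b)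
    (hb : ∀ i, |hT.eigenvalues hn i| ≤ b) (v : E) : ‖T v‖ ≤ b * ‖v‖ := by
  refine (sq_le_sq₀ (norm_nonneg _) (by positivity)).1 ?_
  rw [hT.norm_sq_apply_eq_sum hn, mul_pow, ← (hT.eigenvectorBasis hn).repr.norm_map v,
    EuclideanSpace.norm_sq_eq, Finset.mul_sum]
  simp_rw [← sq_abs (hT.eigenvalues hn _)]
  gcongr with i
  exact hb i

theorem mul_norm_le_norm_apply (hT : T.IsSymmetric) (hn : Module.finrank 𝕜 E = n) {a : ℝ}
    (ha₀ : 0 ≤ a) (ha : ∀ i, a ≤ |hT.eigenvalues hn i|) (v : E) : a * ‖v‖ ≤ ‖T v‖ := by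
  refine (sq_le_sq₀ (by positivity) (norm_nonneg _)).1 ?_
  rw [hT.norm_sq_apply_eq_sum hn, mul_pow, ← (hT.eigenvectorBasis hn).repr.norm_map v,
    EuclideanSpace.norm_sq_eq, Finset.mul_sum]
  simp_rw [← sq_abs (hT.eigenvalues hn _)]
  gcongr with i
  exact ha i

end LinearMap.IsSymmetric

namespace Matrix.IsHermitian

variable {𝕜 n : Type*} [RCLike 𝕜] [Fintype n] [DecidableEq n] {A : Matrix n n 𝕜}

theorem eigenvalues_toEuclideanLin (hA : A.IsHermitian) (j : Fin (Fintype.card n)) :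
    (isSymmetric_toEuclideanLin_iff.mpr hA).eigenvalues finrank_euclideanSpace j =
      hA.eigenvalues (Fintype.equivOfCardEq (Fintype.card_fin _) j) := by
  simp [eigenvalues, eigenvalues₀]

theorem norm_mulVec_le (hA : A.IsHermitian) {b : ℝ} (hb₀ : 0 ≤ b)
    (hb : ∀ i, |hA.eigenvalues i| ≤ b) (x : n → 𝕜) :
    ‖WithLp.toLp 2 (A *ᵥ x)‖ ≤ b * ‖WithLp.toLp 2 x‖ := by
  simpa [toLpLin_apply] using (isSymmetric_toEuclideanLin_iff.mpr hA).norm_apply_le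
    finrank_euclideanSpace hb₀ (fun j => hA.eigenvalues_toEuclideanLin j ▸ hb _) (WithLp.toLp 2 x)

theorem mul_norm_le_norm_mulVec (hA : A.IsHermitian) {a : ℝ} (ha₀ : 0 ≤ a)
    (ha : ∀ i, a ≤ |hA.eigenvalues i|) (x : n → 𝕜) :
    a * ‖WithLp.toLp 2 x‖ ≤ ‖WithLp.toLp 2 (A *ᵥ x)‖ := by
  simpa [toLpLin_apply] using (isSymmetric_toEuclideanLin_iff.mpr hA).mul_norm_le_norm_apply
    finrank_euclideanSpace ha₀ (fun j => hA.eigenvalues_toEuclideanLin j ▸ ha _) (WithLp.toLp 2 x)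

end Matrix.IsHermitian

theorem euclNorm_eq_norm_toLp {N : ℕ} (x : Fin N → ℝ) : euclNorm x = ‖WithLp.toLp 2 x‖ := by
  simp [euclNorm, EuclideanSpace.norm_eq]

theorem euclNorm_sub_comm {N : ℕ} (x y : Fin N → ℝ) : euclNorm (x - y) = euclNorm (y - x) := by
  simp only [euclNorm_eq_norm_toLp, WithLp.toLp_sub, norm_sub_rev]

namespace MeasureTheory

variable {Ω : Type*} [MeasurableSpace Ω] {μ : Measure Ω}

theorem Integrable.matrix_mulVec {𝕜 m n : Type*} [RCLike 𝕜] [Fintype m] [Fintype n]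
    (B : Matrix m n 𝕜) {g : Ω → n → 𝕜} (hg : Integrable g μ) :
    Integrable (fun ω => B *ᵥ g ω) μ :=
  (Matrix.mulVecLin B).toContinuousLinearMap.integrable_comp hg

variable {N : ℕ}

theorem Integrable.euclNorm {g : Ω → Fin N → ℝ} (hg : Integrable g μ) :
    Integrable (fun ω => euclNorm (g ω)) μ := by
  simp_rw [euclNorm_eq_norm_toLp]
  exact ((EuclideanSpace.equiv (Fin N) ℝ).symm.integrable_comp_iff.2 hg).norm

theorem integral_euclNorm_mulVec_le {M : Matrix (Fin N) (Fin N) ℝ} {b : ℝ}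
    (hM : ∀ x, euclNorm (M *ᵥ x) ≤ b * euclNorm x) {g : Ω → Fin N → ℝ} (hg : Integrable g μ) :
    ∫ ω, euclNorm (M *ᵥ g ω) ∂μ ≤ b * ∫ ω, euclNorm (g ω) ∂μ := by
  rw [← integral_const_mul]
  exact integral_mono (hg.matrix_mulVec M).euclNorm (hg.euclNorm.const_mul b) fun ω => hM (g ω)

theorem mul_integral_euclNorm_le {M : Matrix (Fin N) (Fin N) ℝ} {a : ℝ}
    (hM : ∀ x, a * euclNorm x ≤ euclNorm (M *ᵥ x)) {g : Ω → Fin N → ℝ} (hg : Integrable g μ) :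
    a * ∫ ω, euclNorm (g ω) ∂μ ≤ ∫ ω, euclNorm (M *ᵥ g ω) ∂μ := by
  rw [← integral_const_mul]
  exact integral_mono (hg.euclNorm.const_mul a) (hg.matrix_mulVec M).euclNorm fun ω => hM (g ω)

end MeasureTheory

theorem sq_le_of_isLeast_range_sqrt {ι : Type*} {f : ι → ℝ} {r : ℝ}
    (h : IsLeast (Set.range fun i => √(f i)) r) (hf : ∀ i, 0 ≤ f i) (i : ι) : r ^ 2 ≤ f i := by
  obtain ⟨j, rfl⟩ := h.1
  exact (Real.le_sqrt (Real.sqrt_nonneg _) (hf i)).1 (h.2 ⟨i, rfl⟩)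

theorem le_sq_of_isGreatest_range_sqrt {ι : Type*} {f : ι → ℝ} {r : ℝ}
    (h : IsGreatest (Set.range fun i => √(f i)) r) (i : ι) : f i ≤ r ^ 2 :=
  (Real.sqrt_le_iff.1 (h.2 ⟨i, rfl⟩)).2

section QuasiOptimality

variable {Ω : Type*} [MeasurableSpace Ω] {μ : Measure Ω} {N : ℕ}

theorem quasi_optimal_of_minimizes_residual {M : Matrix (Fin N) (Fin N) ℝ} {a b : ℝ}
    (hlow : ∀ x, a * euclNorm x ≤ euclNorm (M *ᵥ x))
    (hhigh : ∀ x, euclNorm (M *ᵥ x) ≤ b * euclNorm x)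
    {S : Set (Ω → Fin N → ℝ)} (hS : ∀ α ∈ S, Integrable α μ)
    {αstar αH : Ω → Fin N → ℝ} (hαstar : Integrable αstar μ) (hαH : αH ∈ S)
    (hmin : ∀ α ∈ S, ∫ ω, euclNorm (M *ᵥ (αH ω - αstar ω)) ∂μ
      ≤ ∫ ω, euclNorm (M *ᵥ (α ω - αstar ω)) ∂μ)
    {α : Ω → Fin N → ℝ} (hα : α ∈ S) :
    a * ∫ ω, euclNorm (αH ω - αstar ω) ∂μ ≤ b * ∫ ω, euclNorm (α ω - αstar ω) ∂μ :=
  calc a * ∫ ω, euclNorm (αH ω - αstar ω) ∂μ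
      ≤ ∫ ω, euclNorm (M *ᵥ (αH ω - αstar ω)) ∂μ :=
        mul_integral_euclNorm_le hlow ((hS αH hαH).sub hαstar)
    _ ≤ ∫ ω, euclNorm (M *ᵥ (α ω - αstar ω)) ∂μ := hmin α hα
    _ ≤ b * ∫ ω, euclNorm (α ω - αstar ω) ∂μ :=
        integral_euclNorm_mulVec_le hhigh ((hS α hα).sub hαstar)

end QuasiOptimality

theorem stmt4_general {Ω : Type*} [MeasurableSpace Ω] (μ : Measure Ω)
    {N : ℕ} (A : Matrix (Fin N) (Fin N) ℝ) (hAinv : IsUnit A)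
    (hAA : (Aᵀ * A).IsHermitian) (ρmax ρmin : ℝ)
    (hρmax : IsGreatest (Set.range fun i => Real.sqrt (hAA.eigenvalues i)) ρmax)
    (hρmin : IsLeast (Set.range fun i => Real.sqrt (hAA.eigenvalues i)) ρmin)
    (F : Ω → Fin N → ℝ) (hF : Integrable F μ)
    (αstar : Ω → Fin N → ℝ) (hαstar : αstar = fun ω => A⁻¹.mulVec (F ω))
    (S : Set (Ω → Fin N → ℝ)) (hSint : ∀ α ∈ S, Integrable α μ)
    (αH : Ω → Fin N → ℝ) (hαHmem : αH ∈ S)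
    (hαHmin : ∀ α ∈ S, (∫ ω, euclNorm ((Aᵀ * A).mulVec (αH ω) - Aᵀ.mulVec (F ω)) ∂μ)
        ≤ ∫ ω, euclNorm ((Aᵀ * A).mulVec (α ω) - Aᵀ.mulVec (F ω)) ∂μ) :
    (∫ ω, euclNorm (αstar ω - αH ω) ∂μ)
      ≤ (ρmax / ρmin) ^ 2 * ⨅ α : S, ∫ ω, euclNorm ((α : Ω → Fin N → ℝ) ω - αstar ω) ∂μ := by
  have hPD : (Aᵀ * A).PosDef := by
    simpa using PosDef.conjTranspose_mul_self A (mulVec_injective_iff_isUnit.2 hAinv)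
  have hρmin_pos : 0 < ρmin := by
    obtain ⟨j, rfl⟩ := hρmin.1
    exact Real.sqrt_pos.2 (hPD.eigenvalues_pos j)
  have hlow : ∀ x, ρmin ^ 2 * euclNorm x ≤ euclNorm ((Aᵀ * A) *ᵥ x) := by
    simpa only [euclNorm_eq_norm_toLp] using hAA.mul_norm_le_norm_mulVec (sq_nonneg ρmin)
      fun i => (sq_le_of_isLeast_range_sqrt hρmin (fun i => (hPD.eigenvalues_pos i).le) i).trans
        (le_abs_self _)
  have hhigh : ∀ x, euclNorm ((Aᵀ * A) *ᵥ x) ≤ ρmax ^ 2 * euclNorm x := by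
    simpa only [euclNorm_eq_norm_toLp] using hAA.norm_mulVec_le (sq_nonneg ρmax)
      fun i => (abs_of_pos (hPD.eigenvalues_pos i)).trans_le
        (le_sq_of_isGreatest_range_sqrt hρmax i)
  have hnormal : ∀ ω, (Aᵀ * A) *ᵥ αstar ω = Aᵀ *ᵥ F ω := fun ω => by
    simp [hαstar, mulVec_mulVec, mul_assoc, mul_nonsing_inv _ ((isUnit_iff_isUnit_det A).1 hAinv)]
  have hmin : ∀ α ∈ S, ∫ ω, euclNorm ((Aᵀ * A) *ᵥ (αH ω - αstar ω)) ∂μ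
      ≤ ∫ ω, euclNorm ((Aᵀ * A) *ᵥ (α ω - αstar ω)) ∂μ := by
    simpa only [mulVec_sub, hnormal] using hαHmin
  have hαstar_int : Integrable αstar μ := hαstar ▸ hF.matrix_mulVec A⁻¹
  have : Nonempty S := ⟨⟨αH, hαHmem⟩⟩
  rw [Real.mul_iInf_of_nonneg (by positivity)]
  refine le_ciInf fun α => ?_
  rw [div_pow, div_mul_eq_mul_div, le_div_iff₀ (by positivity), mul_comm]
  simp_rw [euclNorm_sub_comm (αstar _)]
  exact quasi_optimal_of_minimizes_residual hlow hhigh hSint hαstar_int hαHmem hmin α.2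

/-- Let `(Ω, μ)` be a probability space, `A` an invertible `N×N` real matrix with largest and
smallest singular values `ρmax` and `ρmin` (the square roots of the eigenvalues of `AᵀA`),
`F : Ω → ℝ^N` Bochner integrable, and `α* = A⁻¹ F`. Let `S` be a nonempty set of integrable
functions `Ω → ℝ^N` and `αH ∈ S` a minimizer over `S` of the normal-equation loss
`H(α) = ∫ |AᵀAα(ω) − AᵀF(ω)|₂ dμ`. Then
`‖α* − αH‖_{L¹(Ω)} ≤ κ(A)² inf_{α ∈ S} ‖α − α*‖_{L¹(Ω)}` where `κ(A) = ρmax / ρmin`. -/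
theorem stmt4 {Ω : Type*} [MeasurableSpace Ω] (μ : Measure Ω) [IsProbabilityMeasure μ]
    {N : ℕ} (A : Matrix (Fin N) (Fin N) ℝ) (hAinv : IsUnit A)
    (hAA : (Aᵀ * A).IsHermitian) (ρmax ρmin : ℝ)
    (hρmax : IsGreatest (Set.range fun i => Real.sqrt (hAA.eigenvalues i)) ρmax)
    (hρmin : IsLeast (Set.range fun i => Real.sqrt (hAA.eigenvalues i)) ρmin)
    (F : Ω → Fin N → ℝ) (hF : Integrable F μ)
    (αstar : Ω → Fin N → ℝ) (hαstar : αstar = fun ω => A⁻¹.mulVec (F ω))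
    (S : Set (Ω → Fin N → ℝ)) (hSne : S.Nonempty) (hSint : ∀ α ∈ S, Integrable α μ)
    (αH : Ω → Fin N → ℝ) (hαHmem : αH ∈ S)
    (hαHmin : ∀ α ∈ S, (∫ ω, euclNorm ((Aᵀ * A).mulVec (αH ω) - Aᵀ.mulVec (F ω)) ∂μ)
        ≤ ∫ ω, euclNorm ((Aᵀ * A).mulVec (α ω) - Aᵀ.mulVec (F ω)) ∂μ) :
    (∫ ω, euclNorm (αstar ω - αH ω) ∂μ)
      ≤ (ρmax / ρmin) ^ 2 * ⨅ α : S, ∫ ω, euclNorm ((α : Ω → Fin N → ℝ) ω - αstar ω) ∂μ :=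
  stmt4_general μ A hAinv hAA ρmax ρmin hρmax hρmin F hF αstar hαstar S hSint αH hαHmem hαHmin
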